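/- arXiv:1003.5831 — 4 statements merged into one kernel-verified Lean document; each statement's English description precedes it below -/
import Mathlib

section
/- Let (S, A) be a computable physical model whose set A of observable quantities is finite. Then (S, A) is isomorphic to some computable physical model all of whose observable quantities are projection functions; specifically, if A = {α₁, …, αₙ}, then (S, A) is isomorphic to the computable physical model (T, B) where T = { ⟨α₁(s), α₂(s), …, αₙ(s), s⟩ : s ∈ S } and B = {π₁^{n+1}, π₂^{n+1}, …, πₙ^{n+1}}. -/
/-- Cantor's pairing function `⟨x,y⟩ = (x² + 2xy + y² + 3x + y)/2`. -/
def cantorPair (x y : ℕ) : ℕ := (x * x + 2 * x * y + y * y + 3 * x + y) / 2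

/-- The code `⟨x₁, …, xₙ⟩` of a finite sequence of non-negative integers, obtained by
iterating Cantor's pairing function: `⟨x,y,z⟩ = ⟨⟨x,y⟩,z⟩`, and so on. -/
def seqEncode : List ℕ → ℕ
  | [] => 0
  | x :: xs => xs.foldl cantorPair x

/-- `π` is the projection function `πᵢⁿ` (with `0`-based index `i`), i.e.
`π ⟨x₁, …, xₙ⟩ = x_{i+1}` for every length-`n` sequence. -/
def IsProjection (n i : ℕ) (π : ℕ → ℕ) : Prop :=
  ∀ l : List ℕ, l.length = n → π (seqEncode l) = l.getD i 0

/-- Isomorphism of physical models whose states are non-negative integers and whose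
observable quantities are functions from non-negative integers to non-negative
integers: bijections `φ : S → T` and `ψ : A → B` with `α(s) = ψ(α)(φ(s))`. -/
def Isomorphic (S : Set ℕ) (A : Set (ℕ → ℕ)) (T : Set ℕ) (B : Set (ℕ → ℕ)) : Prop :=
  ∃ (φ : ℕ → ℕ) (ψ : (ℕ → ℕ) → ℕ → ℕ),
    Set.BijOn φ S T ∧ Set.BijOn ψ A B ∧ ∀ s ∈ S, ∀ α ∈ A, α s = ψ α (φ s)

/-!
Cantor's pairing function numbers `ℕ × ℕ` diagonal by diagonal, so its inverse is obtained by
iterating the successor of that enumeration and is primitive recursive; hence so are the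
projections `πᵢⁿ` of iterated pairing codes. The last projection recovers `s` from
`⟨α₁(s), …, αₙ(s), s⟩`, so this encoding is injective with a computable left inverse, which makes
the image of a decidable `S` decidable; and `αᵢ ↦ πᵢⁿ⁺¹` matches the observables.
-/

/-- The pair following `p` in the diagonal enumeration of `ℕ × ℕ` numbered by `cantorPair`. -/
def cantorSucc : ℕ × ℕ → ℕ × ℕ
  | (x, 0) => (0, x + 1)
  | (x, y + 1) => (x + 1, y)

theorem cantorPair_cantorSucc (p : ℕ × ℕ) :
    cantorPair (cantorSucc p).1 (cantorSucc p).2 = cantorPair p.1 p.2 + 1 := by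
  obtain ⟨x, _ | y⟩ := p <;>
  · simp only [cantorSucc, cantorPair]
    rw [← Nat.add_div_right _ two_pos]
    congr 1
    ring

theorem exists_cantorSucc_eq {p : ℕ × ℕ} (hp : p ≠ (0, 0)) : ∃ q, cantorSucc q = p := by
  obtain ⟨_ | x, _ | y⟩ := p
  · exact absurd rfl hp
  · exact ⟨(y, 0), rfl⟩
  · exact ⟨(x, 1), rfl⟩
  · exact ⟨(x, y + 2), rfl⟩

def cantorUnpair (z : ℕ) : ℕ × ℕ := cantorSucc^[z] (0, 0)

theorem cantorUnpair_cantorPair (x y : ℕ) : cantorUnpair (cantorPair x y) = (x, y) := by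
  suffices ∀ z (p : ℕ × ℕ), cantorPair p.1 p.2 = z → cantorUnpair z = p from this _ (x, y) rfl
  intro z
  induction z with
  | zero =>
    intro p hp
    rcases eq_or_ne p (0, 0) with rfl | hne
    · rfl
    obtain ⟨q, rfl⟩ := exists_cantorSucc_eq hne
    rw [cantorPair_cantorSucc] at hp
    omega
  | succ z ih =>
    intro p hp
    have hne : p ≠ (0, 0) := by rintro rfl; simp [cantorPair] at hp
    obtain ⟨q, rfl⟩ := exists_cantorSucc_eq hne
    rw [cantorPair_cantorSucc] at hp
    rw [cantorUnpair, Function.iterate_succ_apply', ← cantorUnpair, ih q (by omega)]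

open Primrec in
theorem primrec₂_cantorPair : Primrec₂ cantorPair := by
  have hx : Primrec (Prod.fst : ℕ × ℕ → ℕ) := fst
  have hy : Primrec (Prod.snd : ℕ × ℕ → ℕ) := snd
  have hmul {f g : ℕ × ℕ → ℕ} (hf : Primrec f) (hg : Primrec g) : Primrec fun p => f p * g p :=
    nat_mul.comp hf hg
  have hadd {f g : ℕ × ℕ → ℕ} (hf : Primrec f) (hg : Primrec g) : Primrec fun p => f p + g p :=
    nat_add.comp hf hg
  exact nat_div.comp (hadd (hadd (hadd (hadd (hmul hx hx) (hmul (hmul (const 2) hx) hy))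
    (hmul hy hy)) (hmul (const 3) hx)) hy) (const 2)

theorem primrec_cantorSucc : Primrec cantorSucc := by
  refine (Primrec.ite (Primrec.eq.comp Primrec.snd (Primrec.const 0))
    ((Primrec.const 0).pair (Primrec.succ.comp Primrec.fst))
    ((Primrec.succ.comp Primrec.fst).pair (Primrec.pred.comp Primrec.snd))).of_eq ?_
  rintro ⟨x, _ | y⟩ <;> rfl

theorem primrec_cantorUnpair : Primrec cantorUnpair :=
  Primrec.nat_iterate Primrec.id (Primrec.const (0, 0)) (primrec_cantorSucc.comp Primrec.snd)

theorem primrec_seqEncode : Primrec seqEncode :=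
  (Primrec.list_foldl Primrec.list_tail Primrec.list_headI
    (h := fun _ p => cantorPair p.1 p.2)
    (primrec₂_cantorPair.comp (Primrec.fst.comp Primrec.snd)
      (Primrec.snd.comp Primrec.snd)).to₂).of_eq fun l => by cases l <;> rfl

theorem seqEncode_append_singleton {l : List ℕ} (hl : l ≠ []) (y : ℕ) :
    seqEncode (l ++ [y]) = cantorPair (seqEncode l) y := by
  obtain ⟨x, xs, rfl⟩ := List.exists_cons_of_ne_nil hl
  simp [seqEncode]

def cantorFst (z : ℕ) : ℕ := (cantorUnpair z).1

def cantorSnd (z : ℕ) : ℕ := (cantorUnpair z).2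

theorem cantorFst_iterate_seqEncode_append {l : List ℕ} (hl : l ≠ []) (m : List ℕ) :
    cantorFst^[m.length] (seqEncode (l ++ m)) = seqEncode l := by
  induction m using List.reverseRecOn with
  | nil => simp
  | append_singleton m y ih =>
    rw [← List.append_assoc, seqEncode_append_singleton (by simp [hl]), List.length_append,
      List.length_singleton, Function.iterate_succ_apply, cantorFst, cantorUnpair_cantorPair, ih]

/-- Since `⟨x₀, …, xₙ₋₁⟩ = ⟨⟨x₀, …, xₙ₋₂⟩, xₙ₋₁⟩`, the entry `xᵢ` is the second component after
`n - 1 - i` first projections, except `x₀`, which is what remains after `n - 1` of them. -/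
def seqProj (n i : ℕ) : ℕ → ℕ :=
  if i = 0 then cantorFst^[n - 1] else cantorSnd ∘ cantorFst^[n - 1 - i]

theorem primrec_seqProj (n i : ℕ) : Primrec (seqProj n i) := by
  have hfst : Primrec cantorFst := Primrec.fst.comp primrec_cantorUnpair
  have hiter (k : ℕ) : Primrec cantorFst^[k] :=
    Primrec.nat_iterate (Primrec.const k) Primrec.id (hfst.comp Primrec.snd)
  unfold seqProj
  split
  · exact hiter _
  · exact (Primrec.snd.comp primrec_cantorUnpair).comp (hiter _)

theorem isProjection_seqProj {n i : ℕ} (hi : i < n) : IsProjection n i (seqProj n i) := by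
  intro l hl
  have hil : i < l.length := hl ▸ hi
  rw [List.getD_eq_getElem _ _ hil]
  rcases Nat.eq_zero_or_pos i with rfl | hpos
  · obtain ⟨x, xs, rfl⟩ := List.exists_cons_of_ne_nil (List.ne_nil_of_length_pos hil)
    have hxs : xs.length = n - 1 := by simp at hl; omega
    simpa [seqProj, seqEncode, hxs] using cantorFst_iterate_seqEncode_append (l := [x]) (by simp) xs
  · have hsplit : seqEncode l = seqEncode ((l.take i ++ [l[i]]) ++ l.drop (i + 1)) := by simp
    have htake : l.take i ≠ [] := List.ne_nil_of_length_pos (by simp; omega)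
    have hdrop : (l.drop (i + 1)).length = n - 1 - i := by simp; omega
    have hne : l.take i ++ [l[i]] ≠ [] :=
      List.append_ne_nil_of_right_ne_nil _ (List.cons_ne_nil _ _)
    rw [seqProj, if_neg hpos.ne', Function.comp_apply, hsplit, ← hdrop,
      cantorFst_iterate_seqEncode_append hne, seqEncode_append_singleton htake, cantorSnd,
      cantorUnpair_cantorPair]

theorem IsProjection.index_eq {n i j : ℕ} {f : ℕ → ℕ} (hfi : IsProjection n i f)
    (hfj : IsProjection n j f) (hi : i < n) (hj : j < n) : i = j := by
  have := (hfi _ List.length_range).symm.trans (hfj _ List.length_range)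
  simpa [List.getD_eq_getElem, hi, hj] using this

theorem seqProj_inj {n i j : ℕ} (hi : i < n) (hj : j < n) : seqProj n i = seqProj n j ↔ i = j :=
  ⟨fun h => (isProjection_seqProj hi).index_eq (h ▸ isProjection_seqProj hj) hi hj,
    congrArg (seqProj n)⟩

theorem ComputablePred.and {α : Type*} [Primcodable α] {p q : α → Prop}
    (hp : ComputablePred p) (hq : ComputablePred q) : ComputablePred fun a => p a ∧ q a := by
  obtain ⟨_, hp⟩ := hp
  obtain ⟨_, hq⟩ := hq
  exact Computable.computablePred ((Primrec.and.to_comp.comp hp hq).of_eq fun a => by simp)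

theorem ComputablePred.comp {α β : Type*} [Primcodable α] [Primcodable β] {p : β → Prop}
    {f : α → β} (hp : ComputablePred p) (hf : Computable f) : ComputablePred fun a => p (f a) := by
  obtain ⟨_, hp⟩ := hp
  exact (hp.comp hf).computablePred

theorem ComputablePred.image_of_leftInverse {α β : Type*} [Primcodable α] [Primcodable β]
    {S : Set α} {f : α → β} {g : β → α} (hS : ComputablePred (· ∈ S)) (hf : Computable f)
    (hg : Computable g) (hgf : Function.LeftInverse g f) : ComputablePred (· ∈ f '' S) := by
  classical
  have hdec : ComputablePred fun b => g b ∈ S ∧ f (g b) = b :=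
    (hS.comp hg).and (Primrec.eq.decide.to_comp.comp (hf.comp hg) Computable.id).computablePred
  refine hdec.of_eq fun b => ⟨fun ⟨hb, hfb⟩ => ⟨g b, hb, hfb⟩, ?_⟩
  rintro ⟨a, ha, rfl⟩
  exact ⟨(hgf a).symm ▸ ha, by rw [hgf a]⟩

theorem Set.bijOn_extend_range {ι α β : Type*} {f : ι → α} {g : ι → β}
    (hf : Function.Injective f) (hg : Function.Injective g) (e : α → β) :
    Set.BijOn (Function.extend f g e) (Set.range f) (Set.range g) := by
  refine ⟨?_, ?_, ?_⟩
  · rintro _ ⟨i, rfl⟩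
    exact ⟨i, (hf.extend_apply g e i).symm⟩
  · rintro _ ⟨i, rfl⟩ _ ⟨j, rfl⟩ h
    rw [hf.extend_apply, hf.extend_apply] at h
    rw [hg h]
  · rintro _ ⟨i, rfl⟩
    exact ⟨f i, ⟨i, rfl⟩, hf.extend_apply g e i⟩

theorem isomorphic_of_injective {ι : Type*} {S : Set ℕ} {α π : ι → ℕ → ℕ} {φ : ℕ → ℕ}
    (hα : Function.Injective α) (hπ : Function.Injective π) (hφ : Set.InjOn φ S)
    (h : ∀ s ∈ S, ∀ i, α i s = π i (φ s)) : Isomorphic S (Set.range α) (φ '' S) (Set.range π) :=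
  ⟨φ, Function.extend α π id, hφ.bijOn_image, Set.bijOn_extend_range hα hπ id, by
    rintro s hs _ ⟨i, rfl⟩
    rw [hα.extend_apply]
    exact h s hs i⟩

/-- A computable physical model `(S, A)` with a finite set
`A = {α₁, …, αₙ}` of (distinct) observable quantities is isomorphic to a computable
physical model all of whose observable quantities are projection functions; namely to
`(T, B)` where `T = { ⟨α₁(s), …, αₙ(s), s⟩ : s ∈ S }` and `B = {π₁ⁿ⁺¹, …, πₙⁿ⁺¹}`. -/
theorem isomorphic_to_projection_model (n : ℕ) (S : Set ℕ) (α : Fin n → ℕ → ℕ)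
    (hinj : Function.Injective α)
    (hS : ComputablePred (· ∈ S)) (hα : ∀ i, Computable (α i)) :
    ∃ π : Fin n → ℕ → ℕ,
      (∀ i : Fin n, Computable (π i) ∧ IsProjection (n + 1) i (π i)) ∧
      ComputablePred
        (· ∈ ((fun s => seqEncode ((List.ofFn fun i => α i s) ++ [s])) '' S)) ∧
      Isomorphic S (Set.range α)
        ((fun s => seqEncode ((List.ofFn fun i => α i s) ++ [s])) '' S)
        (Set.range π) := by
  set code : ℕ → ℕ := fun s => seqEncode ((List.ofFn fun i => α i s) ++ [s])
  have hcode : Computable code := primrec_seqEncode.to_comp.comp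
    (Computable.list_concat.comp (Computable.list_ofFn hα) Computable.id)
  have hlen (s : ℕ) : ((List.ofFn fun i => α i s) ++ [s]).length = n + 1 := by simp
  have hproj (s : ℕ) (i : Fin n) : seqProj (n + 1) i (code s) = α i s := by
    rw [isProjection_seqProj (i := i) (by omega) _ (hlen s)]
    simp
  have hdecode : Function.LeftInverse (seqProj (n + 1) n) code := fun s => by
    simp [code, isProjection_seqProj n.lt_succ_self _ (hlen s)]
  refine ⟨fun i => seqProj (n + 1) i,
    fun i => ⟨(primrec_seqProj _ _).to_comp, isProjection_seqProj (by omega)⟩,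
    hS.image_of_leftInverse hcode (primrec_seqProj _ _).to_comp hdecode,
    isomorphic_of_injective hinj ?_ hdecode.injective.injOn fun s _ i => (hproj s i).symm⟩
  exact fun i j h => Fin.ext ((seqProj_inj (by omega) (by omega)).1 h)
end

section
/- A non-negative integer physical model (S, A) is isomorphic to some computable physical model whenever S is a recursively enumerable set and every member of A is a partial recursive function whose domain includes all members of S. -/
/-- Isomorphism between a non-negative integer physical model `(S, A)` whose observable
quantities are partial functions (defined on all of `S`) and a model `(T, B)` whose
observable quantities are total functions: bijections `φ : S → T` and `ψ : A → B` with
`α(s) = ψ(α)(φ(s))` for all `s ∈ S` and `α ∈ A`. -/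
def IsomorphicPT (S : Set ℕ) (A : Set (ℕ →. ℕ)) (T : Set ℕ) (B : Set (ℕ → ℕ)) : Prop :=
  ∃ (φ : ℕ → ℕ) (ψ : (ℕ →. ℕ) → ℕ → ℕ),
    Set.BijOn φ S T ∧ Set.BijOn ψ A B ∧
    ∀ s ∈ S, ∀ α ∈ A, α s = Part.some (ψ α (φ s))

/-!
Fix a code `c` whose domain is `S`, and let `T` be the set of pairs `⟨n, t⟩` such that `c`
halts on `n` in exactly `t` steps. Running `c` for `t` and for `t - 1` steps decides `T`, and
`n ↦ ⟨n, tₙ⟩` is a bijection `S → T` undone by `Nat.unpair`. An observable `α` is moved to `T` by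
reading `α` at the first coordinate, which is total on `T` because `α` is defined on `S`; outside
`T` (for instance at `0`, since nothing halts in `0` steps) it outputs a code of `α`, which keeps
distinct observables distinct.
-/

open Nat.Partrec (Code)
open Nat.Partrec.Code

theorem Nat.find_eq_iff_of_monotone {p : ℕ → Prop} [DecidablePred p] (hp : Monotone p)
    (h0 : ¬p 0) (h : ∃ n, p n) {k : ℕ} : Nat.find h = k ↔ p k ∧ ¬p (k - 1) := by
  rw [Nat.find_eq_iff]
  refine and_congr_right fun hk => ⟨fun hlt => ?_, fun hprev j hj hpj => hprev (hp (by omega) hpj)⟩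
  rcases k with _ | k
  · exact absurd hk h0
  · exact hlt k k.lt_succ_self

theorem REPred.exists_code {p : ℕ → Prop} (hp : REPred p) :
    ∃ c : Code, ∀ n, p n ↔ (eval c n).Dom := by
  obtain ⟨c, hc⟩ := Nat.Partrec.Code.exists_code.1 <| Partrec.nat_iff.1 <|
    hp.map ((Computable.const 0).comp Computable.fst).to₂
  exact ⟨c, fun n => by simp [hc, Part.assert]⟩

def Nat.Partrec.Code.haltsWithin (c : Code) (n k : ℕ) : Bool := (evaln k c n).isSome

theorem Nat.Partrec.Code.haltsWithin_zero (c : Code) (n : ℕ) : c.haltsWithin n 0 = false := by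
  simp [haltsWithin, evaln]

theorem Nat.Partrec.Code.monotone_haltsWithin (c : Code) (n : ℕ) :
    Monotone fun k => c.haltsWithin n k = true := by
  intro a b hab h
  obtain ⟨x, hx⟩ := Option.isSome_iff_exists.1 h
  exact Option.isSome_iff_exists.2 ⟨x, evaln_mono hab hx⟩

theorem Nat.Partrec.Code.exists_haltsWithin_iff_dom (c : Code) (n : ℕ) :
    (∃ k, c.haltsWithin n k = true) ↔ (eval c n).Dom := by
  simp only [haltsWithin, Option.isSome_iff_exists, Part.dom_iff_mem, evaln_complete]
  exact exists_comm

theorem Nat.Partrec.Code.primrec_haltsWithin (c : Code) : Primrec₂ c.haltsWithin :=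
  Primrec.option_isSome.comp <|
    primrec_evaln.comp ((Primrec.snd.pair (_root_.Primrec.const c)).pair Primrec.fst)

open Classical in
noncomputable def Nat.Partrec.Code.haltingTime (c : Code) (n : ℕ) : ℕ :=
  if h : ∃ k, c.haltsWithin n k = true then Nat.find h else 0

theorem Nat.Partrec.Code.haltingTime_eq_iff {c : Code} {n : ℕ} (h : (eval c n).Dom) {k : ℕ} :
    c.haltingTime n = k ↔ c.haltsWithin n k = true ∧ ¬c.haltsWithin n (k - 1) = true := by
  rw [haltingTime, dif_pos ((exists_haltsWithin_iff_dom c n).2 h)]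
  exact Nat.find_eq_iff_of_monotone (monotone_haltsWithin c n) (by simp [haltsWithin_zero]) _

def Nat.Partrec.Code.haltingPairs (c : Code) : Set ℕ :=
  {m | (eval c m.unpair.1).Dom ∧ c.haltingTime m.unpair.1 = m.unpair.2}

theorem Nat.Partrec.Code.mem_haltingPairs_iff {c : Code} {m : ℕ} :
    m ∈ c.haltingPairs ↔
      c.haltsWithin m.unpair.1 m.unpair.2 = true ∧
        ¬c.haltsWithin m.unpair.1 (m.unpair.2 - 1) = true := by
  refine ⟨fun ⟨hdom, htime⟩ => (haltingTime_eq_iff hdom).1 htime, fun h => ?_⟩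
  have hdom := (exists_haltsWithin_iff_dom c _).1 ⟨_, h.1⟩
  exact ⟨hdom, (haltingTime_eq_iff hdom).2 h⟩

theorem Nat.Partrec.Code.computablePred_mem_haltingPairs (c : Code) :
    ComputablePred (· ∈ c.haltingPairs) := by
  have hfst := (Primrec.fst.comp Primrec.unpair).to_comp
  have hsnd := (Primrec.snd.comp Primrec.unpair).to_comp
  have hhalts := c.primrec_haltsWithin.to_comp
  refine ComputablePred.computable_iff.2
    ⟨fun m => c.haltsWithin m.unpair.1 m.unpair.2 && !c.haltsWithin m.unpair.1 (m.unpair.2 - 1),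
      Primrec.and.to_comp.comp (hhalts.comp hfst hsnd)
        (Primrec.not.to_comp.comp (hhalts.comp hfst (_root_.Primrec.pred.to_comp.comp hsnd))),
      funext fun m => propext ?_⟩
  simp [mem_haltingPairs_iff]

theorem Nat.Partrec.Code.bijOn_haltingPairs (c : Code) :
    Set.BijOn (fun n => Nat.pair n (c.haltingTime n)) {n | (eval c n).Dom} c.haltingPairs := by
  refine ⟨fun n hn => ?_, fun a _ b _ hab => ?_, fun m hm => ⟨m.unpair.1, hm.1, ?_⟩⟩
  · simpa [haltingPairs] using hn
  · simpa using congrArg (fun m => m.unpair.1) hab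
  · simp [hm.2]

theorem Nat.Partrec.Code.zero_notMem_haltingPairs (c : Code) : 0 ∉ c.haltingPairs := by
  rintro ⟨hdom, htime⟩
  rw [Nat.unpair_zero] at hdom htime
  simpa [haltsWithin_zero] using ((haltingTime_eq_iff hdom).1 htime).1

noncomputable def codeOf (α : ℕ →. ℕ) : Code :=
  Classical.epsilon fun c => eval c = α

theorem eval_codeOf {α : ℕ →. ℕ} (hα : Partrec α) : eval (codeOf α) = α :=
  Classical.epsilon_spec (exists_code.1 (Partrec.nat_iff.1 hα))

open Classical in
noncomputable def transportObservable (T : Set ℕ) (g : ℕ → ℕ) (α : ℕ →. ℕ) (m : ℕ) : ℕ :=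
  if m ∈ T then (α (g m)).getOrElse 0
  else Encodable.encode (codeOf α)

theorem transportObservable_of_mem {T : Set ℕ} {g : ℕ → ℕ} {α : ℕ →. ℕ} {m : ℕ} (hm : m ∈ T)
    (hdom : (α (g m)).Dom) : α (g m) = Part.some (transportObservable T g α m) := by
  classical
  rw [transportObservable, if_pos hm, Part.getOrElse_of_dom _ hdom, Part.some_get]

theorem injOn_transportObservable {T : Set ℕ} {g : ℕ → ℕ} {m₀ : ℕ} (hm₀ : m₀ ∉ T) :
    Set.InjOn (transportObservable T g) {α | Partrec α} := by
  intro α hα β hβ h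
  have hcode := Encodable.encode_injective <| by
    simpa [transportObservable, hm₀] using congrFun h m₀
  rw [← eval_codeOf hα, ← eval_codeOf hβ, hcode]

theorem computable_transportObservable {T : Set ℕ} {g : ℕ → ℕ} {α : ℕ →. ℕ}
    (hT : ComputablePred (· ∈ T)) (hg : Computable g) (hα : Partrec α)
    (hdom : ∀ m ∈ T, (α (g m)).Dom) : Computable (transportObservable T g α) := by
  classical
  have hcode := (Computable.const (α := ℕ) (Encodable.encode (codeOf α))).partrec
  refine (Partrec.cond hT.decide (hα.comp hg) hcode).of_eq fun m => ?_
  by_cases hm : m ∈ T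
  · simp [hm, transportObservable_of_mem hm (hdom m hm)]
  · simp [hm, transportObservable]

theorem exists_computable_isomorphicPT {S T : Set ℕ} {A : Set (ℕ →. ℕ)} {φ g : ℕ → ℕ} {m₀ : ℕ}
    (hT : ComputablePred (· ∈ T)) (hφ : Set.BijOn φ S T) (hg : Computable g)
    (hgφ : ∀ s ∈ S, g (φ s) = s) (hm₀ : m₀ ∉ T) (hA : ∀ α ∈ A, Partrec α)
    (hdom : ∀ α ∈ A, ∀ s ∈ S, (α s).Dom) :
    ∃ B : Set (ℕ → ℕ), (∀ β ∈ B, Computable β) ∧ IsomorphicPT S A T B := by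
  have hgT : ∀ m ∈ T, g m ∈ S := by
    intro m hm
    obtain ⟨s, hs, rfl⟩ := hφ.surjOn hm
    rwa [hgφ s hs]
  refine ⟨transportObservable T g '' A, ?_, φ, transportObservable T g, hφ,
    ((injOn_transportObservable hm₀).mono hA).bijOn_image, fun s hs α hα => ?_⟩
  · rintro _ ⟨α, hα, rfl⟩
    exact computable_transportObservable hT hg (hA α hα) fun m hm => hdom α hα _ (hgT m hm)
  · have hdomφ : (α (g (φ s))).Dom := by rw [hgφ s hs]; exact hdom α hα s hs
    rw [← transportObservable_of_mem (hφ.mapsTo hs) hdomφ, hgφ s hs]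

/-- A non-negative integer physical model `(S, A)` is isomorphic to some
computable physical model whenever `S` is recursively enumerable and every member of `A`
is a partial recursive function whose domain includes all members of `S`. -/
theorem isomorphic_to_computable_model (S : Set ℕ) (A : Set (ℕ →. ℕ))
    (hS : REPred (· ∈ S)) (hA : ∀ α ∈ A, Partrec α)
    (hdom : ∀ α ∈ A, ∀ s ∈ S, (α s).Dom) :
    ∃ (T : Set ℕ) (B : Set (ℕ → ℕ)),
      ComputablePred (· ∈ T) ∧ (∀ β ∈ B, Computable β) ∧
      IsomorphicPT S A T B := by
  obtain ⟨c, hc⟩ := hS.exists_code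
  obtain rfl : S = {n | (eval c n).Dom} := Set.ext hc
  obtain ⟨B, hB, hiso⟩ := exists_computable_isomorphicPT c.computablePred_mem_haltingPairs
    c.bijOn_haltingPairs (Computable.fst.comp Computable.unpair) (fun n _ => by simp)
    c.zero_notMem_haltingPairs hA hdom
  exact ⟨c.haltingPairs, B, c.computablePred_mem_haltingPairs, hB, hiso⟩
end

section
/- Let B be a countable basis for the standard topology of ℝⁿ and let ν be a coding for B. Then there does not exist a partial recursive (oracle) functional φ with the property that for every singleton set {x} ⊆ ℝⁿ and for every basic representation R_x of {x} in the effective topology (B, ν), the function m ↦ φ(R_x, m), computed with oracle access to the characteristic function of R_x, is total and is an oracle for x in (B, ν). -/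
/-- Partial functions `ℕ →. ℕ` that are computable uniformly relative to an oracle:
`PartrecIn F` says that the functional `O ↦ F O` is computed by a single oracle machine,
so that `F O` is partial recursive relative to `O`, uniformly in the oracle `O`. -/
inductive PartrecIn : ((ℕ →. ℕ) → ℕ →. ℕ) → Prop
  | oracle : PartrecIn fun O => O
  | zero : PartrecIn fun _ => pure 0
  | succ : PartrecIn fun _ => ↑Nat.succ
  | left : PartrecIn fun _ => ↑fun n : ℕ => n.unpair.1
  | right : PartrecIn fun _ => ↑fun n : ℕ => n.unpair.2
  | pair {F G} : PartrecIn F → PartrecIn G →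
      PartrecIn fun O n => Nat.pair <$> F O n <*> G O n
  | comp {F G} : PartrecIn F → PartrecIn G →
      PartrecIn fun O n => G O n >>= F O
  | prec {F G} : PartrecIn F → PartrecIn G →
      PartrecIn fun O => Nat.unpaired fun a n =>
        n.rec (F O a) fun y IH => do let i ← IH; G O (Nat.pair a (Nat.pair y i))
  | rfind {F} : PartrecIn F →
      PartrecIn fun O a => Nat.rfind fun n => (fun m => m = 0) <$> F O (Nat.pair a n)

/-- `L` is a local basis for the point `x` with respect to the basis `Bas`. -/
def IsLocalBasis {X : Type*} (Bas : Set (Set X)) (L : Set (Set X)) (x : X) : Prop :=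
  L ⊆ Bas ∧ (∀ l ∈ L, x ∈ l) ∧ ∀ b ∈ Bas, x ∈ b → ∃ l ∈ L, l ⊆ b

/-- `φ : ℕ → dom` is an oracle for the point `x` in the effective topology whose basis
is coded by `code` on the domain `dom`: the image under `code` of the range of `φ`
is a local basis for `x`. -/
def IsOracleFor {X : Type*} (dom : Set ℕ) (code : ℕ → Set X) (x : X) (φ : ℕ → ℕ) : Prop :=
  (∀ n, φ n ∈ dom) ∧ IsLocalBasis (code '' dom) (code '' Set.range φ) x

/-- `R` is a basic representation of the set `A` in the effective topology whose basis
is `code '' dom`, coded by `code` on the domain `dom`. -/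
def IsBasicRep {X : Type*} (dom : Set ℕ) (code : ℕ → Set X) (A : Set X) (R : Set ℕ) : Prop :=
  R ⊆ dom ∧ ∀ x : X, x ∈ A ↔ ∃ L, IsLocalBasis (code '' dom) L x ∧ L ⊆ code '' R

/-!
An oracle computation that halts has queried only finitely many values of its oracle.
Take distinct points `x ≠ y` and the canonical representation `R` of `{x}` (all basic sets
containing `x`). Some output `g m₀` on `χ_R` codes a basic neighbourhood of `x` that misses `y`,
and it is computed from the values of `χ_R` on a finite set `s`. Replacing `R` outside `s` by the
canonical representation of `y` gives a basic representation of `{y}`: in a T₁ space without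
isolated points, adding or removing finitely many basic sets changes neither the local bases
at `y` nor the absence of local bases at other points. On this representation the functional
still outputs `g m₀`, which would then have to be a neighbourhood of `y`.
-/

open Filter Set TopologicalSpace Topology

theorem PartrecIn.exists_finset_eqOn {F : (ℕ →. ℕ) → ℕ →. ℕ} (hF : PartrecIn F) :
    ∀ {O : ℕ →. ℕ} {m a : ℕ}, a ∈ F O m →
      ∃ s : Finset ℕ, ∀ O' : ℕ →. ℕ, EqOn O O' s → a ∈ F O' m := by
  induction hF with
  | oracle =>
    exact fun {_ m _} h => ⟨{m}, fun _ hO => by simpa [← hO (Finset.mem_singleton_self m)]⟩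
  | zero | succ | left | right => exact fun h => ⟨∅, fun _ _ => h⟩
  | pair _ _ ihf ihg =>
    intro O m a h
    simp only [Seq.seq, Part.mem_bind_iff, Part.map_eq_map, Part.mem_map_iff] at h ⊢
    obtain ⟨_, ⟨b, hb, rfl⟩, c, hc, rfl⟩ := h
    obtain ⟨s, hs⟩ := ihf hb
    obtain ⟨t, ht⟩ := ihg hc
    exact ⟨s ∪ t, fun O' hO =>
      ⟨_, ⟨b, hs O' (hO.mono (by simp)), rfl⟩, c, ht O' (hO.mono (by simp)), rfl⟩⟩
  | comp _ _ ihf ihg =>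
    intro O m a h
    obtain ⟨b, hb, hab⟩ := Part.mem_bind_iff.1 h
    obtain ⟨s, hs⟩ := ihg hb
    obtain ⟨t, ht⟩ := ihf hab
    exact ⟨s ∪ t, fun O' hO =>
      Part.mem_bind_iff.2 ⟨b, hs O' (hO.mono (by simp)), ht O' (hO.mono (by simp))⟩⟩
  | prec _ _ ihf ihg =>
    intro O m a h
    simp only [Nat.unpaired] at h ⊢
    generalize m.unpair.2 = k at h ⊢
    induction k generalizing a with
    | zero => exact ihf h
    | succ k ih =>
      obtain ⟨b, hb, hab⟩ := Part.mem_bind_iff.1 h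
      obtain ⟨s, hs⟩ := ih hb
      obtain ⟨t, ht⟩ := ihg hab
      exact ⟨s ∪ t, fun O' hO =>
        Part.mem_bind_iff.2 ⟨b, hs O' (hO.mono (by simp)), ht O' (hO.mono (by simp))⟩⟩
  | @rfind G _ ihf =>
    intro O m a h
    obtain ⟨hzero, hpos⟩ := Nat.mem_rfind.1 h
    have hval : ∀ j, ∃ s : Finset ℕ, j ≤ a → ∀ O' : ℕ →. ℕ, EqOn O O' s →
        decide (j = a) ∈ (fun n => decide (n = 0)) <$> G O' (Nat.pair m j) := by
      intro j
      by_cases hja : j ≤ a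
      · have hj : decide (j = a) ∈ (fun n => decide (n = 0)) <$> G O (Nat.pair m j) := by
          rcases hja.lt_or_eq with hlt | rfl
          · simpa [hlt.ne] using hpos hlt
          · simpa using hzero
        obtain ⟨v, hv, hvj⟩ := (Part.mem_map_iff _).1 hj
        obtain ⟨s, hs⟩ := ihf hv
        exact ⟨s, fun _ O' hO => (Part.mem_map_iff _).2 ⟨v, hs O' hO, hvj⟩⟩
      · exact ⟨∅, fun h => absurd h hja⟩
    choose s hs using hval
    have hsub : ∀ j ≤ a, (s j : Set ℕ) ⊆ (Finset.range (a + 1)).biUnion s := fun j hj =>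
      Finset.coe_subset.2 (Finset.subset_biUnion_of_mem s (Finset.mem_range_succ_iff.2 hj))
    refine ⟨(Finset.range (a + 1)).biUnion s, fun O' hO =>
      Nat.mem_rfind.2 ⟨?_, fun {j} hj => ?_⟩⟩
    · simpa using hs a le_rfl O' (hO.mono (hsub a le_rfl))
    · simpa [hj.ne] using hs j hj.le O' (hO.mono (hsub j hj.le))

theorem TopologicalSpace.IsTopologicalBasis.exists_mem_subset_not_superset {X : Type*}
    [TopologicalSpace X] [T1Space X] {B : Set (Set X)} (hB : IsTopologicalBasis B) {z : X}
    [(𝓝[≠] z).NeBot] {𝒰 : Set (Set X)} (h𝒰 : 𝒰.Finite) (h𝒰z : ∀ U ∈ 𝒰, U ∈ 𝓝 z)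
    {b : Set X} (hb : b ∈ 𝓝 z) : ∃ c ∈ B, z ∈ c ∧ c ⊆ b ∧ ∀ U ∈ 𝒰, ¬U ⊆ c := by
  -- `c` avoids a point `≠ z` of each `U ∈ 𝒰`
  have hpoint (U : 𝒰) : ∃ q ∈ (U : Set X), q ≠ z := by
    obtain ⟨q, hqz, hqU⟩ := Filter.nonempty_of_mem (inter_mem_nhdsWithin {z}ᶜ (h𝒰z U U.2))
    exact ⟨q, hqU, hqz⟩
  choose q hqU hqz using hpoint
  have : Finite 𝒰 := h𝒰.to_subtype
  have hz : z ∉ range q := fun ⟨U, hU⟩ => hqz U hU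
  obtain ⟨c, hcB, hzc, hc⟩ :=
    hB.mem_nhds_iff.1 (inter_mem hb ((finite_range q).isClosed.compl_mem_nhds hz))
  exact ⟨c, hcB, hzc, fun _ hx => (hc hx).1,
    fun U hU hUc => (hc (hUc (hqU ⟨U, hU⟩))).2 ⟨⟨U, hU⟩, rfl⟩⟩

section FiniteModification

variable {X : Type*} [TopologicalSpace X] [T1Space X] {dom : Set ℕ} {code : ℕ → Set X}

theorem isLocalBasis_image_diff_finite (hbasis : IsTopologicalBasis (code '' dom)) {y : X}
    [(𝓝[≠] y).NeBot] {s : Set ℕ} (hs : s.Finite) :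
    IsLocalBasis (code '' dom) (code '' ({k | k ∈ dom ∧ y ∈ code k} \ s)) y := by
  refine ⟨image_mono fun k hk => hk.1.1, fun _ ⟨k, hk, hkl⟩ => hkl ▸ hk.1.2, ?_⟩
  intro b hb hyb
  have hnhds : ∀ U ∈ code '' {k ∈ s | k ∈ dom ∧ y ∈ code k}, U ∈ 𝓝 y := by
    rintro _ ⟨k, ⟨-, hk, hyk⟩, rfl⟩
    exact (hbasis.isOpen ⟨k, hk, rfl⟩).mem_nhds hyk
  obtain ⟨_, ⟨k, hk, rfl⟩, hyk, hkb, hnot⟩ := hbasis.exists_mem_subset_not_superset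
    ((hs.sep _).image _) hnhds ((hbasis.isOpen hb).mem_nhds hyb)
  exact ⟨code k, ⟨k, ⟨⟨hk, hyk⟩, fun hks => hnot _ ⟨k, ⟨hks, hk, hyk⟩, rfl⟩ subset_rfl⟩, rfl⟩, hkb⟩

theorem isBasicRep_singleton_of_diff_subset (hbasis : IsTopologicalBasis (code '' dom))
    [∀ x : X, (𝓝[≠] x).NeBot] {y : X} {s R : Set ℕ} (hs : s.Finite) (hRdom : R ⊆ dom)
    (hlower : {k | k ∈ dom ∧ y ∈ code k} \ s ⊆ R) (hupper : R ⊆ {k | y ∈ code k} ∪ s) :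
    IsBasicRep dom code {y} R := by
  refine ⟨hRdom, fun z => ⟨?_, ?_⟩⟩
  · rintro rfl
    exact ⟨_, isLocalBasis_image_diff_finite hbasis hs, image_mono hlower⟩
  rintro ⟨L, ⟨-, hLz, hLbasis⟩, hLR⟩
  by_contra hzy
  have hnhds : ∀ U ∈ code '' {k ∈ s | k ∈ dom ∧ z ∈ code k}, U ∈ 𝓝 z := by
    rintro _ ⟨k, ⟨-, hk, hzk⟩, rfl⟩
    exact (hbasis.isOpen ⟨k, hk, rfl⟩).mem_nhds hzk
  obtain ⟨c, hc, hzc, hcy, hnot⟩ := hbasis.exists_mem_subset_not_superset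
    ((hs.sep _).image _) hnhds (compl_singleton_mem_nhds hzy)
  obtain ⟨_, hlL, hlc⟩ := hLbasis c hc hzc
  obtain ⟨k, hkR, rfl⟩ := hLR hlL
  rcases hupper hkR with hyk | hks
  · exact hcy (hlc hyk) rfl
  · exact hnot _ ⟨k, ⟨hks, hRdom hkR, hLz _ hlL⟩, rfl⟩ hlc

end FiniteModification

theorem not_exists_partrecIn_oracle_of_isBasicRep {X : Type*} [TopologicalSpace X] [T1Space X]
    [Nontrivial X] [∀ x : X, (𝓝[≠] x).NeBot] {dom : Set ℕ} {code : ℕ → Set X}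
    (hbasis : IsTopologicalBasis (code '' dom)) :
    ¬ ∃ F : (ℕ →. ℕ) → ℕ →. ℕ, PartrecIn F ∧
        ∀ (x : X) (R : Set ℕ), IsBasicRep dom code {x} R →
          ∃ g : ℕ → ℕ,
            (∀ m, F (fun k => Part.some (R.indicator (fun _ => 1) k)) m
                = Part.some (g m)) ∧
            IsOracleFor dom code x g := by
  rintro ⟨F, hFrec, hF⟩
  obtain ⟨x, y, hxy⟩ := exists_pair_ne X
  set R := {k | k ∈ dom ∧ x ∈ code k}
  obtain ⟨g, hgF, -, -, -, hgbasis⟩ := hF x R <| isBasicRep_singleton_of_diff_subset hbasis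
    finite_empty (fun _ hk => hk.1) (fun _ hk => hk.1) (fun _ hk => Or.inl hk.2)
  obtain ⟨b, hb, hxb, hby⟩ := hbasis.mem_nhds_iff.1 (compl_singleton_mem_nhds hxy)
  obtain ⟨_, ⟨_, ⟨m₀, rfl⟩, rfl⟩, hm₀b⟩ := hgbasis b hb hxb
  obtain ⟨s, hs⟩ := hFrec.exists_finset_eqOn ((hgF m₀).symm ▸ Part.mem_some (g m₀))
  set R' := {k | k ∈ dom ∧ y ∈ code k} \ s ∪ (R ∩ s)
  have hR' : IsBasicRep dom code {y} R' := isBasicRep_singleton_of_diff_subset hbasis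
    s.finite_toSet (union_subset (fun _ hk => hk.1.1) fun _ hk => hk.1.1) subset_union_left
    (union_subset (fun _ hk => Or.inl hk.1.2) fun _ hk => Or.inr hk.2)
  obtain ⟨g', hg'F, -, -, hg'y, -⟩ := hF y R' hR'
  have hagree : EqOn (fun k => Part.some (R.indicator (fun _ => 1) k))
      (fun k => Part.some (R'.indicator (fun _ => 1) k)) s := by
    intro k hk
    have : k ∈ R ↔ k ∈ R' := by simp [R', hk]
    by_cases hkR : k ∈ R
    · simp [indicator_of_mem hkR, indicator_of_mem (this.1 hkR)]
    · simp [indicator_of_notMem hkR, indicator_of_notMem (mt this.2 hkR)]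
  have hgg' : g m₀ = g' m₀ := Part.mem_some_iff.1 (hg'F m₀ ▸ hs _ hagree)
  exact hby (hm₀b (hgg' ▸ hg'y _ ⟨_, ⟨m₀, rfl⟩, rfl⟩)) rfl

/-- Let `B` be a countable basis for the standard topology of `ℝⁿ`
(`n ≥ 1`), coded by `ν = code` on the domain `dom`.  Then there is no partial recursive
oracle functional `F` such that for every point `x ∈ ℝⁿ` and every basic representation
`R` of `{x}`, the function `m ↦ F(χ_R, m)` (computed with oracle access to the
characteristic function `χ_R` of `R`) is total and is an oracle for `x` in `(B, ν)`. -/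
theorem no_uniform_oracle_from_basicRep (n : ℕ) (hn : 0 < n)
    (dom : Set ℕ) (code : ℕ → Set (Fin n → ℝ))
    (hbasis : TopologicalSpace.IsTopologicalBasis (code '' dom)) :
    ¬ ∃ F : (ℕ →. ℕ) → ℕ →. ℕ, PartrecIn F ∧
        ∀ (x : Fin n → ℝ) (R : Set ℕ), IsBasicRep dom code {x} R →
          ∃ g : ℕ → ℕ,
            (∀ m, F (fun k => Part.some (R.indicator (fun _ => 1) k)) m
                = Part.some (g m)) ∧
            IsOracleFor dom code x g := by
  have : Nonempty (Fin n) := ⟨⟨0, hn⟩⟩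
  exact not_exists_partrecIn_oracle_of_isBasicRep hbasis
end

section
/- Let (S, A) be a physical model in normal form with A = {ϖ₁ⁿ, …, ϖₙⁿ}, and let (R, H) be a basic representation of (S, A) in a T₁ effective topology (B, ν) = (B₁, ν₁) ⊗ (B₂, ν₂) ⊗ ⋯ ⊗ (Bₙ, νₙ). If k ≤ n and φ₁, …, φ_k are complete oracles for real numbers x₁, …, x_k in the effective topologies (B₁, ν₁), …, (B_k, ν_k) respectively, then the set Q = { r ∈ R : for every i ∈ {1, …, k} there exists m ∈ ℕ with πᵢⁿ(r) = φᵢ(m) } is a basic representation in (B, ν) of the predicted set P = { s ∈ S : ϖ₁ⁿ(s) = x₁ and … and ϖ_kⁿ(s) = x_k }, and Q is recursively enumerable relative to R, φ₁, …, φ_k, uniformly. -/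
/-- An oracle for `x` is complete iff every code of a basis element containing `x`
appears in its range. -/
def IsCompleteOracleFor {X : Type*} (dom : Set ℕ) (code : ℕ → Set X) (x : X)
    (φ : ℕ → ℕ) : Prop :=
  IsOracleFor dom code x φ ∧ ∀ n ∈ dom, x ∈ code n → n ∈ Set.range φ

/-- The domain of the coding of the effective product
`(B₁, ν₁) ⊗ ⋯ ⊗ (Bₙ, νₙ)`: the codes `r = ⟨u₁, …, uₙ⟩` all of whose components
`uᵢ = πᵢⁿ(r)` lie in the respective domains. -/
def prodDom (n : ℕ) (dom : Fin n → Set ℕ) (π : Fin n → ℕ → ℕ) : Set ℕ :=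
  { r | ∀ i : Fin n, π i r ∈ dom i }

/-- The coding of the effective product: `ν⟨u₁, …, uₙ⟩ = ν₁(u₁) × ⋯ × νₙ(uₙ)`. -/
def prodCode (n : ℕ) (code : Fin n → ℕ → Set ℝ) (π : Fin n → ℕ → ℕ) :
    ℕ → Set (Fin n → ℝ) :=
  fun r => { x | ∀ i : Fin n, x i ∈ code i (π i r) }

/-- The join of (the characteristic function of) the set `R` and the oracles
`φ₁, …, φ_k` into a single total oracle. -/
noncomputable def joinOracle (k : ℕ) (R : Set ℕ) (φ : Fin k → ℕ → ℕ) : ℕ →. ℕ :=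
  fun m =>
    if m.unpair.1 = 0 then Part.some (R.indicator (fun _ => 1) m.unpair.2)
    else if h : m.unpair.1 - 1 < k then Part.some (φ ⟨m.unpair.1 - 1, h⟩ m.unpair.2)
    else Part.some 0

universe u

theorem Part.bind_pfun_coe {α β : Type u} (x : Part α) (f : α → β) :
    x >>= (f : α →. β) = x.map f :=
  Part.bind_some_eq_map f x

theorem Part.list_sum_ofFn_some {α : Type*} [AddMonoid α] {k : ℕ} (f : Fin k → α) :
    (List.ofFn fun i => Part.some (f i)).sum = Part.some (List.ofFn f).sum := by
  induction k with
  | zero => rfl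
  | succ k ih => simp [List.ofFn_succ, ih, Part.some_add_some]

theorem Nat.rfind_some_dom_iff {b : ℕ → Bool} :
    (Nat.rfind fun m => Part.some (b m)).Dom ↔ ∃ m, b m = true :=
  Nat.rfind_dom.trans ⟨fun ⟨m, hm, _⟩ => ⟨m, (Part.mem_some_iff.1 hm).symm⟩,
    fun ⟨m, hm⟩ => ⟨m, hm ▸ Part.mem_some _, fun _ => trivial⟩⟩

theorem Nat.computable_unpair_fst : Computable fun n : ℕ => n.unpair.1 :=
  (Primrec.fst.comp Primrec.unpair).to_comp

theorem Nat.computable_unpair_snd : Computable fun n : ℕ => n.unpair.2 :=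
  (Primrec.snd.comp Primrec.unpair).to_comp

namespace PartrecIn

theorem congr {F G : (ℕ →. ℕ) → ℕ →. ℕ} (hF : PartrecIn F) (e : ∀ O n, F O n = G O n) :
    PartrecIn G := by
  rwa [show F = G from funext fun O => funext (e O)] at hF

theorem of_partrec {f : ℕ →. ℕ} (hf : Nat.Partrec f) : PartrecIn fun _ => f := by
  induction hf with
  | zero => exact .zero
  | succ => exact .succ
  | left => exact .left
  | right => exact .right
  | pair _ _ ihf ihg => exact .pair ihf ihg
  | comp _ _ ihf ihg => exact .comp ihf ihg
  | prec _ _ ihf ihg => exact .prec ihf ihg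
  | rfind _ ih => exact .rfind ih

theorem of_computable {f : ℕ → ℕ} (hf : Computable f) : PartrecIn fun _ => (f : ℕ →. ℕ) :=
  of_partrec (Partrec.nat_iff.1 hf)

theorem map_oracle {e : ℕ → ℕ} {g : ℕ → ℕ → ℕ} (he : Computable e) (hg : Computable₂ g) :
    PartrecIn fun O n => (O (e n)).map (g n) := by
  have hquery : PartrecIn fun O n => O (e n) :=
    (comp oracle (of_computable he)).congr fun O n => Part.bind_some _ _
  refine (comp (of_computable (hg.comp Nat.computable_unpair_fst Nat.computable_unpair_snd))
    (pair (of_computable .id) hquery)).congr fun O n => ?_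
  simp [Seq.seq, Part.bind_pfun_coe, Part.map_map, Function.comp_def]

theorem add {F G : (ℕ →. ℕ) → ℕ →. ℕ} (hF : PartrecIn F) (hG : PartrecIn G) :
    PartrecIn fun O n => F O n + G O n := by
  have hadd : Computable fun v : ℕ => v.unpair.1 + v.unpair.2 :=
    Primrec.nat_add.to_comp.comp Nat.computable_unpair_fst Nat.computable_unpair_snd
  refine (comp (of_computable hadd) (pair hF hG)).congr fun O n => ?_
  simp [Seq.seq, Part.bind_pfun_coe, Part.map_map, Function.comp_def, Part.add_def,
    Part.map_bind]

theorem list_sum_ofFn {k : ℕ} {F : Fin k → (ℕ →. ℕ) → ℕ →. ℕ} (hF : ∀ i, PartrecIn (F i)) :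
    PartrecIn fun O n => (List.ofFn fun i => F i O n).sum := by
  induction k with
  | zero => exact zero.congr fun _ _ => rfl
  | succ k ih => simpa [List.ofFn_succ] using add (hF 0) (ih fun i => hF i.succ)

end PartrecIn

def Nat.unpairNth : ℕ → ℕ → ℕ
  | 0, m => m.unpair.1
  | i + 1, m => unpairNth i m.unpair.2

theorem Nat.primrec_unpairNth : ∀ i, Primrec (Nat.unpairNth i)
  | 0 => Primrec.fst.comp Primrec.unpair
  | i + 1 => (primrec_unpairNth i).comp (Primrec.snd.comp Primrec.unpair)

theorem Nat.exists_unpairNth_eq : ∀ {k : ℕ} (w : Fin k → ℕ), ∃ m, ∀ i : Fin k, unpairNth i m = w i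
  | 0, _ => ⟨0, fun i => i.elim0⟩
  | _ + 1, w => by
    obtain ⟨m, hm⟩ := exists_unpairNth_eq (Fin.tail w)
    refine ⟨Nat.pair (w 0) m, Fin.cases ?_ fun i => ?_⟩
    · simp [unpairNth]
    · simpa [unpairNth, Fin.tail] using hm i

section joinOracle

variable {k : ℕ} {R : Set ℕ} {φ : Fin k → ℕ → ℕ}

open scoped Classical in
theorem joinOracle_pair_zero (r : ℕ) :
    joinOracle k R φ (Nat.pair 0 r) = Part.some (if r ∈ R then 1 else 0) := by
  simp [joinOracle, Set.indicator_apply]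

theorem joinOracle_pair_succ (i : Fin k) (m : ℕ) :
    joinOracle k R φ (Nat.pair (i + 1) m) = Part.some (φ i m) := by
  simp [joinOracle]

end joinOracle

/-- At `p = ⟨q, m⟩`, with `m` coding the candidate indices `Nat.unpairNth i m` into the oracles
`φᵢ`, this counts the failed checks among `q ∈ R` and `φᵢ(Nat.unpairNth i m) = ρᵢ(q)`. -/
def witnessTest (k : ℕ) (ρ : Fin k → ℕ → ℕ) (O : ℕ →. ℕ) (p : ℕ) : Part ℕ :=
  (O (Nat.pair 0 p.unpair.1)).map (fun a => if a = 1 then 0 else 1) +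
    (List.ofFn fun i : Fin k => (O (Nat.pair (i + 1) (Nat.unpairNth i p.unpair.2))).map
      fun a => if a = ρ i p.unpair.1 then 0 else 1).sum

def witnessSearch (k : ℕ) (ρ : Fin k → ℕ → ℕ) (O : ℕ →. ℕ) (q : ℕ) : Part ℕ :=
  Nat.rfind fun m => (fun z => decide (z = 0)) <$> witnessTest k ρ O (Nat.pair q m)

section witnessSearch

variable {k : ℕ} {ρ : Fin k → ℕ → ℕ}

theorem partrecIn_witnessTest (hρ : ∀ i, Computable (ρ i)) : PartrecIn (witnessTest k ρ) := by
  have hne : Computable₂ fun a b : ℕ => if a = b then 0 else 1 :=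
    (Primrec.ite Primrec.eq (Primrec.const 0) (Primrec.const 1)).to_comp
  refine PartrecIn.add (PartrecIn.map_oracle ?_ ?_) (PartrecIn.list_sum_ofFn fun i =>
    PartrecIn.map_oracle ?_ ?_)
  · exact Primrec₂.natPair.to_comp.comp (Computable.const 0) Nat.computable_unpair_fst
  · exact hne.comp Computable.snd (Computable.const 1)
  · exact Primrec₂.natPair.to_comp.comp (Computable.const _)
      ((Nat.primrec_unpairNth i).to_comp.comp Nat.computable_unpair_snd)
  · exact hne.comp Computable.snd ((hρ i).comp (Nat.computable_unpair_fst.comp Computable.fst))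

theorem partrecIn_witnessSearch (hρ : ∀ i, Computable (ρ i)) : PartrecIn (witnessSearch k ρ) :=
  .rfind (partrecIn_witnessTest hρ)

open scoped Classical in
theorem witnessTest_joinOracle (R : Set ℕ) (φ : Fin k → ℕ → ℕ) (q m : ℕ) :
    witnessTest k ρ (joinOracle k R φ) (Nat.pair q m) = Part.some
      ((if q ∈ R then 0 else 1) +
        (List.ofFn fun i => if φ i (Nat.unpairNth i m) = ρ i q then 0 else 1).sum) := by
  simp [witnessTest, joinOracle_pair_zero, joinOracle_pair_succ, Part.list_sum_ofFn_some,
    Part.some_add_some]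

theorem witnessSearch_joinOracle_dom_iff (R : Set ℕ) (φ : Fin k → ℕ → ℕ) (q : ℕ) :
    (witnessSearch k ρ (joinOracle k R φ) q).Dom ↔ q ∈ R ∧ ∀ i, ∃ m, ρ i q = φ i m := by
  simp only [witnessSearch, witnessTest_joinOracle, Part.map_eq_map, Part.map_some,
    Nat.rfind_some_dom_iff, decide_eq_true_eq, Nat.add_eq_zero_iff, ite_eq_left_iff,
    List.sum_eq_zero_iff, List.mem_ofFn, one_ne_zero, imp_false, not_not, forall_exists_index,
    forall_apply_eq_imp_iff]
  constructor
  · rintro ⟨m, hqR, hm⟩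
    exact ⟨hqR, fun i => ⟨_, (hm i).symm⟩⟩
  · rintro ⟨hqR, hw⟩
    choose w hw using hw
    obtain ⟨m, hm⟩ := Nat.exists_unpairNth_eq w
    exact ⟨m, hqR, fun i => by rw [hm, hw]⟩

end witnessSearch

theorem IsLocalBasis.eq_of_forall_mem {X : Type*} [TopologicalSpace X] [T1Space X]
    {Bas L : Set (Set X)} {x y : X} (hBas : TopologicalSpace.IsTopologicalBasis Bas)
    (hL : IsLocalBasis Bas L x) (hy : ∀ l ∈ L, y ∈ l) : x = y := by
  by_contra hne
  obtain ⟨b, hb, hxb, hby⟩ :=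
    hBas.exists_subset_of_mem_open (Set.mem_compl_singleton_iff.2 hne) isOpen_compl_singleton
  obtain ⟨l, hlL, hlb⟩ := hL.2.2 b hb hxb
  exact hby (hlb (hy l hlL)) rfl

theorem IsOracleFor.mem_code {X : Type*} {dom : Set ℕ} {code : ℕ → Set X} {x : X}
    {φ : ℕ → ℕ} (h : IsOracleFor dom code x φ) (m : ℕ) : x ∈ code (φ m) :=
  h.2.2.1 _ ⟨φ m, Set.mem_range_self m, rfl⟩

section prediction

variable {n k : ℕ} (hk : k ≤ n) {dom : Fin n → Set ℕ} {code : Fin n → ℕ → Set ℝ}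
  {π : Fin n → ℕ → ℕ} {R : Set ℕ} {x : Fin k → ℝ} {φ : Fin k → ℕ → ℕ}

theorem mem_prodCode_of_oracles
    (hφ : ∀ i : Fin k, IsOracleFor (dom (Fin.castLE hk i)) (code (Fin.castLE hk i)) (x i) (φ i))
    {r : ℕ} (hr : ∀ i : Fin k, ∃ m, π (Fin.castLE hk i) r = φ i m) {s : Fin n → ℝ}
    (hs : s ∈ prodCode n code π r) :
    (fun j : Fin n => if h : (j : ℕ) < k then x ⟨j, h⟩ else s j) ∈ prodCode n code π r := by
  intro j
  by_cases h : (j : ℕ) < k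
  · obtain ⟨m, hm⟩ := hr ⟨j, h⟩
    have hj : Fin.castLE hk ⟨j, h⟩ = j := rfl
    rw [hj] at hm
    simpa [h, hm] using (hφ ⟨j, h⟩).mem_code m
  · simpa [h] using hs j

theorem isBasicRep_prediction [TopologicalSpace (Fin n → ℝ)] [T1Space (Fin n → ℝ)]
    (hBas : TopologicalSpace.IsTopologicalBasis (prodCode n code π '' prodDom n dom π))
    {S : Set (Fin n → ℝ)} (hSR : IsBasicRep (prodDom n dom π) (prodCode n code π) S R)
    (hφ : ∀ i : Fin k,
      IsCompleteOracleFor (dom (Fin.castLE hk i)) (code (Fin.castLE hk i)) (x i) (φ i)) :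
    IsBasicRep (prodDom n dom π) (prodCode n code π)
      { s ∈ S | ∀ i : Fin k, s (Fin.castLE hk i) = x i }
      { r ∈ R | ∀ i : Fin k, ∃ m, π (Fin.castLE hk i) r = φ i m } := by
  refine ⟨fun r hr => hSR.1 hr.1, fun s => ⟨?_, ?_⟩⟩
  · rintro ⟨hsS, hsx⟩
    obtain ⟨L, hL, hLR⟩ := (hSR.2 s).1 hsS
    refine ⟨L, hL, fun l hl => ?_⟩
    obtain ⟨r, hrR, rfl⟩ := hLR hl
    refine ⟨r, ⟨hrR, fun i => ?_⟩, rfl⟩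
    have hx : x i ∈ code (Fin.castLE hk i) (π (Fin.castLE hk i) r) :=
      hsx i ▸ hL.2.1 _ hl (Fin.castLE hk i)
    obtain ⟨m, hm⟩ := (hφ i).2 _ (hSR.1 hrR _) hx
    exact ⟨m, hm.symm⟩
  · rintro ⟨L, hL, hLQ⟩
    have hLR : L ⊆ prodCode n code π '' R := hLQ.trans (Set.image_mono fun r hr => hr.1)
    refine ⟨(hSR.2 s).2 ⟨L, hL, hLR⟩, fun i => ?_⟩
    have hst := hL.eq_of_forall_mem hBas fun l hl => by
      obtain ⟨r, hr, rfl⟩ := hLQ hl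
      exact mem_prodCode_of_oracles hk (fun i => (hφ i).1) hr.2 (hL.2.1 _ hl)
    simpa using congrFun hst (Fin.castLE hk i)

end prediction

theorem prediction_basicRep_general (n k : ℕ) (hk : k ≤ n)
    (dom : Fin n → Set ℕ) (code : Fin n → ℕ → Set ℝ)
    (π : Fin n → ℕ → ℕ)
    (hπc : ∀ i : Fin n, Computable (π i)) :
    ∃ F : (ℕ →. ℕ) → ℕ →. ℕ, PartrecIn F ∧
      ∀ (tp : TopologicalSpace (Fin n → ℝ)),
        @T1Space _ tp →
        @TopologicalSpace.IsTopologicalBasis _ tp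
          (prodCode n code π '' prodDom n dom π) →
        ∀ (S : Set (Fin n → ℝ)) (R : Set ℕ),
          IsBasicRep (prodDom n dom π) (prodCode n code π) S R →
          ∀ (x : Fin k → ℝ) (φ : Fin k → ℕ → ℕ),
            (∀ i : Fin k,
              IsCompleteOracleFor (dom (Fin.castLE hk i)) (code (Fin.castLE hk i))
                (x i) (φ i)) →
            IsBasicRep (prodDom n dom π) (prodCode n code π)
                { s ∈ S | ∀ i : Fin k, s (Fin.castLE hk i) = x i }
                { r ∈ R | ∀ i : Fin k, ∃ m, π (Fin.castLE hk i) r = φ i m } ∧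
              ∀ q : ℕ,
                q ∈ { r ∈ R | ∀ i : Fin k, ∃ m, π (Fin.castLE hk i) r = φ i m } ↔
                  (F (joinOracle k R φ) q).Dom := by
  refine ⟨witnessSearch k fun i => π (Fin.castLE hk i),
    partrecIn_witnessSearch fun i => hπc _, ?_⟩
  intro tp _ hBas S R hSR x φ hφ
  exact ⟨isBasicRep_prediction hk hBas hSR hφ,
    fun q => (witnessSearch_joinOracle_dom_iff R φ q).symm⟩

/-- Let `(S, A)` be a physical model in normal form with
`A = {ϖ₁ⁿ, …, ϖₙⁿ}` and let `(R, H)` be a basic representation of `(S, A)` in a `T₁`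
effective topology `(B, ν) = (B₁, ν₁) ⊗ ⋯ ⊗ (Bₙ, νₙ)`.  If `k ≤ n` and `φ₁, …, φ_k` are
complete oracles for real numbers `x₁, …, x_k` in `(B₁, ν₁), …, (B_k, ν_k)`, then
`Q = { r ∈ R : ∀ i ≤ k ∃ m, πᵢⁿ(r) = φᵢ(m) }` is a basic representation in `(B, ν)` of
the predicted set `P = { s ∈ S : ϖ₁ⁿ(s) = x₁ ∧ ⋯ ∧ ϖ_kⁿ(s) = x_k }`, and `Q` is
recursively enumerable relative to `R, φ₁, …, φ_k`, uniformly. -/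
theorem prediction_basicRep (n k : ℕ) (hk : k ≤ n)
    (dom : Fin n → Set ℕ) (code : Fin n → ℕ → Set ℝ)
    (π : Fin n → ℕ → ℕ) (hπ : ∀ i : Fin n, IsProjection n i (π i))
    (hπc : ∀ i : Fin n, Computable (π i)) :
    ∃ F : (ℕ →. ℕ) → ℕ →. ℕ, PartrecIn F ∧
      ∀ (tp : TopologicalSpace (Fin n → ℝ)),
        @T1Space _ tp →
        @TopologicalSpace.IsTopologicalBasis _ tp
          (prodCode n code π '' prodDom n dom π) →
        ∀ (S : Set (Fin n → ℝ)) (R : Set ℕ),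
          IsBasicRep (prodDom n dom π) (prodCode n code π) S R →
          ∀ (x : Fin k → ℝ) (φ : Fin k → ℕ → ℕ),
            (∀ i : Fin k,
              IsCompleteOracleFor (dom (Fin.castLE hk i)) (code (Fin.castLE hk i))
                (x i) (φ i)) →
            IsBasicRep (prodDom n dom π) (prodCode n code π)
                { s ∈ S | ∀ i : Fin k, s (Fin.castLE hk i) = x i }
                { r ∈ R | ∀ i : Fin k, ∃ m, π (Fin.castLE hk i) r = φ i m } ∧
              ∀ q : ℕ,
                q ∈ { r ∈ R | ∀ i : Fin k, ∃ m, π (Fin.castLE hk i) r = φ i m } ↔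
                  (F (joinOracle k R φ) q).Dom :=
  prediction_basicRep_general n k hk dom code π hπc
end
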